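/- Let I be a two-sided ideal of a Leibniz algebra g. If the quotient g/I is quasi-Artinian and I (regarded as a Leibniz algebra) is Artinian, then g is quasi-Artinian. -/
import Mathlib


universe u v

/-- A (left) Leibniz algebra over a field `K`: a `K`-vector space with a bilinear
bracket satisfying the left Leibniz identity. -/
class LeibnizAlgebra (K : Type u) (g : Type v) [Field K] [AddCommGroup g] [Module K g]
    extends Bracket g g where
  add_bracket : ∀ x y z : g, ⁅x + y, z⁆ = ⁅x, z⁆ + ⁅y, z⁆
  bracket_add : ∀ x y z : g, ⁅x, y + z⁆ = ⁅x, y⁆ + ⁅x, z⁆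
  smul_bracket : ∀ (c : K) (x y : g), ⁅c • x, y⁆ = c • ⁅x, y⁆
  bracket_smul : ∀ (c : K) (x y : g), ⁅x, c • y⁆ = c • ⁅x, y⁆
  leibniz : ∀ x y z : g, ⁅x, ⁅y, z⁆⁆ = ⁅⁅x, y⁆, z⁆ + ⁅y, ⁅x, z⁆⁆

namespace Leibniz

section Defs

variable (K : Type u) (g : Type v) [Field K] [AddCommGroup g] [Module K g] [LeibnizAlgebra K g]

lemma zero_bracket (y : g) : ⁅(0 : g), y⁆ = 0 := by
  have h := LeibnizAlgebra.smul_bracket (0 : K) (0 : g) y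
  simpa using h

lemma bracket_zero (y : g) : ⁅y, (0 : g)⁆ = 0 := by
  have h := LeibnizAlgebra.bracket_smul (0 : K) y (0 : g)
  simpa using h

lemma neg_bracket (x y : g) : ⁅-x, y⁆ = -⁅x, y⁆ := by
  have h := LeibnizAlgebra.smul_bracket (-1 : K) x y
  simpa using h

lemma bracket_neg (x y : g) : ⁅x, -y⁆ = -⁅x, y⁆ := by
  have h := LeibnizAlgebra.bracket_smul (-1 : K) x y
  simpa using h

lemma sub_bracket (x x' y : g) : ⁅x - x', y⁆ = ⁅x, y⁆ - ⁅x', y⁆ := by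
  rw [sub_eq_add_neg, LeibnizAlgebra.add_bracket, neg_bracket K, ← sub_eq_add_neg]

lemma bracket_sub (x y y' : g) : ⁅x, y - y'⁆ = ⁅x, y⁆ - ⁅x, y'⁆ := by
  rw [sub_eq_add_neg, LeibnizAlgebra.bracket_add, bracket_neg K, ← sub_eq_add_neg]

/-- A (two-sided) ideal of a Leibniz algebra: a subspace `I` with `⁅g,I⁆ ⊆ I` and
`⁅I,g⁆ ⊆ I`. -/
def IsIdeal (I : Submodule K g) : Prop :=
  ∀ x : g, ∀ a ∈ I, ⁅x, a⁆ ∈ I ∧ ⁅a, x⁆ ∈ I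

/-- The bracket `[A, B]` of two subspaces: the span of all brackets `⁅a, b⁆`. -/
def bk (A B : Submodule K g) : Submodule K g :=
  Submodule.span K {z : g | ∃ a ∈ A, ∃ b ∈ B, z = ⁅a, b⁆}

/-- The derived series of a subspace `I`, computed in `g`:
`I^(0) = I`, `I^(n+1) = [I^(n), I^(n)]`. -/
def subDerived (I : Submodule K g) : ℕ → Submodule K g
  | 0 => I
  | n + 1 => bk K g (subDerived I n) (subDerived I n)

/-- The derived series of `g`: `g^(0) = g`, `g^(n+1) = [g^(n), g^(n)]`. -/
def derived : ℕ → Submodule K g := subDerived K g ⊤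

/-- A Leibniz algebra is solvable if `g^(n) = 0` for some `n`. -/
def IsSolvable : Prop := ∃ n : ℕ, derived K g n = ⊥

/-- A Leibniz algebra is abelian if its bracket is identically zero. -/
def IsAbelian : Prop := ∀ x y : g, ⁅x, y⁆ = 0

/-- A nonzero Leibniz algebra is simple if its only two-sided ideals are `⊥` and `⊤`. -/
def IsSimpleAlg : Prop :=
  (∃ x : g, x ≠ 0) ∧ ∀ I : Submodule K g, IsIdeal K g I → I = ⊥ ∨ I = ⊤

/-- A Leibniz algebra `g` is quasi-Artinian if for every descending chain of ideals
`I_1 ⊇ I_2 ⊇ ⋯` there is `m` with `[g^(m), I_m] ⊆ I_n` and `[I_m, g^(m)] ⊆ I_n` for all `n`. -/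
def QuasiArtinian : Prop :=
  ∀ I : ℕ → Submodule K g, (∀ n, IsIdeal K g (I n)) → (∀ n, I (n + 1) ≤ I n) →
    ∃ m : ℕ, ∀ n : ℕ,
      bk K g (derived K g m) (I m) ≤ I n ∧ bk K g (I m) (derived K g m) ≤ I n

/-- A Leibniz algebra is Artinian if every descending chain of two-sided ideals stabilizes. -/
def ArtinianAlg : Prop :=
  ∀ I : ℕ → Submodule K g, (∀ n, IsIdeal K g (I n)) → (∀ n, I (n + 1) ≤ I n) →
    ∃ m : ℕ, ∀ n : ℕ, m ≤ n → I n = I m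

/-- A solvable ideal: an ideal which is solvable (as a Leibniz algebra). -/
def IsSolvableIdeal (I : Submodule K g) : Prop :=
  IsIdeal K g I ∧ ∃ n : ℕ, subDerived K g I n = ⊥

/-- An abelian ideal: an ideal whose bracket vanishes identically. -/
def IsAbelianIdeal (I : Submodule K g) : Prop :=
  IsIdeal K g I ∧ ∀ x ∈ I, ∀ y ∈ I, ⁅x, y⁆ = (0 : g)

/-- Minimal condition on solvable ideals: every descending chain of solvable
two-sided ideals stabilizes. -/
def MinOnSolvableIdeals : Prop :=
  ∀ I : ℕ → Submodule K g, (∀ n, IsSolvableIdeal K g (I n)) → (∀ n, I (n + 1) ≤ I n) →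
    ∃ m : ℕ, ∀ n : ℕ, m ≤ n → I n = I m

/-- Minimal condition on abelian ideals: every descending chain of abelian
two-sided ideals stabilizes. -/
def MinOnAbelianIdeals : Prop :=
  ∀ I : ℕ → Submodule K g, (∀ n, IsAbelianIdeal K g (I n)) → (∀ n, I (n + 1) ≤ I n) →
    ∃ m : ℕ, ∀ n : ℕ, m ≤ n → I n = I m

/-- `I` is a two-sided ideal of the subalgebra `A` (both viewed as subspaces of `g`). -/
def IsIdealIn (A I : Submodule K g) : Prop :=
  I ≤ A ∧ ∀ x ∈ A, ∀ a ∈ I, ⁅x, a⁆ ∈ I ∧ ⁅a, x⁆ ∈ I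

/-- A prime ideal: a proper two-sided ideal `P` such that `[h₁, h₂] ⊆ P` for ideals
`h₁, h₂` forces `h₁ ⊆ P` or `h₂ ⊆ P`. -/
def IsPrimeIdeal (P : Submodule K g) : Prop :=
  IsIdeal K g P ∧ P ≠ ⊤ ∧
    ∀ h₁ h₂ : Submodule K g, IsIdeal K g h₁ → IsIdeal K g h₂ →
      bk K g h₁ h₂ ≤ P → h₁ ≤ P ∨ h₂ ≤ P

/-- `Leib(g)`: the subspace spanned by all squares `⁅x, x⁆`. -/
def leibIdeal : Submodule K g :=
  Submodule.span K {z : g | ∃ x : g, z = ⁅x, x⁆}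

/-- Given a subspace `C`, the preimage of the center of `g/C`:
all `x` with `⁅x, y⁆ ∈ C` and `⁅y, x⁆ ∈ C` for every `y`. -/
def centerStep (C : Submodule K g) : Submodule K g where
  carrier := {x : g | ∀ y : g, ⁅x, y⁆ ∈ C ∧ ⁅y, x⁆ ∈ C}
  add_mem' := by
    intro a b ha hb
    intro y
    constructor
    · rw [LeibnizAlgebra.add_bracket]; exact C.add_mem (ha y).1 (hb y).1
    · rw [LeibnizAlgebra.bracket_add]; exact C.add_mem (ha y).2 (hb y).2
  zero_mem' := by
    intro y
    constructor
    · rw [zero_bracket K]; exact C.zero_mem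
    · rw [bracket_zero K]; exact C.zero_mem
  smul_mem' := by
    intro c a ha y
    constructor
    · rw [LeibnizAlgebra.smul_bracket]; exact C.smul_mem c (ha y).1
    · rw [LeibnizAlgebra.bracket_smul]; exact C.smul_mem c (ha y).2

/-- The transfinite upper central series of `g`: `ζ_0 = 0`,
`ζ_{α+1}/ζ_α = Z(g/ζ_α)`, and `ζ_ρ = ⋃_{α<ρ} ζ_α` at limit ordinals. -/
noncomputable def zeta : Ordinal.{0} → Submodule K g := fun o =>
  Ordinal.limitRecOn o ⊥ (fun _ C => centerStep K g C)
    (fun o _ ih => ⨆ (a : Ordinal.{0}) (h : a < o), ih a h)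

/-- `g` is hypercentral if `ζ_α(g) = g` for some ordinal `α`. -/
def Hypercentral : Prop := ∃ o : Ordinal.{0}, zeta K g o = ⊤

end Defs

section Quotient

variable {K : Type u} {g : Type v} [Field K] [AddCommGroup g] [Module K g] [LeibnizAlgebra K g]

/-- The bracket induced on the quotient `g ⧸ I` by a two-sided ideal `I`. -/
def quotBracket (I : Submodule K g) (hI : IsIdeal K g I) : g ⧸ I → g ⧸ I → g ⧸ I :=
  Quotient.map₂ (fun x y : g => ⁅x, y⁆) (by
    intro x x' hx y y' hy
    have hx' : x - x' ∈ I := (Submodule.quotientRel_def I).1 hx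
    have hy' : y - y' ∈ I := (Submodule.quotientRel_def I).1 hy
    refine (Submodule.quotientRel_def I).2 ?_
    have key : ⁅x, y⁆ - ⁅x', y'⁆ = ⁅x - x', y⁆ + ⁅x', y - y'⁆ := by
      rw [sub_bracket K, bracket_sub K]
      abel
    rw [key]
    exact I.add_mem (hI y (x - x') hx').2 (hI x' (y - y') hy').1)

@[simp] lemma quotBracket_mk (I : Submodule K g) (hI : IsIdeal K g I) (x y : g) :
    quotBracket I hI (Submodule.Quotient.mk x) (Submodule.Quotient.mk y) =
      Submodule.Quotient.mk ⁅x, y⁆ := rfl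

/-- The quotient Leibniz algebra `g ⧸ I` of `g` by a two-sided ideal `I`. -/
def quotLeibniz (I : Submodule K g) (hI : IsIdeal K g I) : LeibnizAlgebra K (g ⧸ I) where
  bracket := quotBracket I hI
  add_bracket X Y Z := by
    obtain ⟨x, rfl⟩ := Submodule.Quotient.mk_surjective I X
    obtain ⟨y, rfl⟩ := Submodule.Quotient.mk_surjective I Y
    obtain ⟨z, rfl⟩ := Submodule.Quotient.mk_surjective I Z
    show quotBracket I hI (Submodule.Quotient.mk x + Submodule.Quotient.mk y)
        (Submodule.Quotient.mk z) = _
    rw [← Submodule.Quotient.mk_add, quotBracket_mk]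
    show _ = quotBracket I hI (Submodule.Quotient.mk x) (Submodule.Quotient.mk z) +
      quotBracket I hI (Submodule.Quotient.mk y) (Submodule.Quotient.mk z)
    rw [quotBracket_mk, quotBracket_mk, ← Submodule.Quotient.mk_add,
      LeibnizAlgebra.add_bracket]
  bracket_add X Y Z := by
    obtain ⟨x, rfl⟩ := Submodule.Quotient.mk_surjective I X
    obtain ⟨y, rfl⟩ := Submodule.Quotient.mk_surjective I Y
    obtain ⟨z, rfl⟩ := Submodule.Quotient.mk_surjective I Z
    show quotBracket I hI (Submodule.Quotient.mk x)
        (Submodule.Quotient.mk y + Submodule.Quotient.mk z) = _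
    rw [← Submodule.Quotient.mk_add, quotBracket_mk]
    show _ = quotBracket I hI (Submodule.Quotient.mk x) (Submodule.Quotient.mk y) +
      quotBracket I hI (Submodule.Quotient.mk x) (Submodule.Quotient.mk z)
    rw [quotBracket_mk, quotBracket_mk, ← Submodule.Quotient.mk_add,
      LeibnizAlgebra.bracket_add]
  smul_bracket c X Y := by
    obtain ⟨x, rfl⟩ := Submodule.Quotient.mk_surjective I X
    obtain ⟨y, rfl⟩ := Submodule.Quotient.mk_surjective I Y
    show quotBracket I hI (c • Submodule.Quotient.mk x) (Submodule.Quotient.mk y) =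
      c • quotBracket I hI (Submodule.Quotient.mk x) (Submodule.Quotient.mk y)
    rw [← Submodule.Quotient.mk_smul, quotBracket_mk, quotBracket_mk,
      ← Submodule.Quotient.mk_smul, LeibnizAlgebra.smul_bracket]
  bracket_smul c X Y := by
    obtain ⟨x, rfl⟩ := Submodule.Quotient.mk_surjective I X
    obtain ⟨y, rfl⟩ := Submodule.Quotient.mk_surjective I Y
    show quotBracket I hI (Submodule.Quotient.mk x) (c • Submodule.Quotient.mk y) =
      c • quotBracket I hI (Submodule.Quotient.mk x) (Submodule.Quotient.mk y)
    rw [← Submodule.Quotient.mk_smul, quotBracket_mk, quotBracket_mk,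
      ← Submodule.Quotient.mk_smul, LeibnizAlgebra.bracket_smul]
  leibniz X Y Z := by
    obtain ⟨x, rfl⟩ := Submodule.Quotient.mk_surjective I X
    obtain ⟨y, rfl⟩ := Submodule.Quotient.mk_surjective I Y
    obtain ⟨z, rfl⟩ := Submodule.Quotient.mk_surjective I Z
    show quotBracket I hI (Submodule.Quotient.mk x)
        (quotBracket I hI (Submodule.Quotient.mk y) (Submodule.Quotient.mk z)) = _
    rw [quotBracket_mk, quotBracket_mk]
    show _ = quotBracket I hI
        (quotBracket I hI (Submodule.Quotient.mk x) (Submodule.Quotient.mk y))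
        (Submodule.Quotient.mk z) +
      quotBracket I hI (Submodule.Quotient.mk y)
        (quotBracket I hI (Submodule.Quotient.mk x) (Submodule.Quotient.mk z))
    rw [quotBracket_mk, quotBracket_mk, quotBracket_mk, quotBracket_mk,
      ← Submodule.Quotient.mk_add, LeibnizAlgebra.leibniz]

/-- A two-sided ideal of a Leibniz algebra, regarded as a Leibniz algebra itself. -/
def idealLeibniz (I : Submodule K g) (hI : IsIdeal K g I) : LeibnizAlgebra K I where
  bracket a b := ⟨⁅(a : g), (b : g)⁆, (hI (a : g) (b : g) b.2).1⟩
  add_bracket a b c := Subtype.ext (by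
    show ⁅((a + b : I) : g), (c : g)⁆ = ⁅(a : g), (c : g)⁆ + ⁅(b : g), (c : g)⁆
    rw [Submodule.coe_add, LeibnizAlgebra.add_bracket])
  bracket_add a b c := Subtype.ext (by
    show ⁅(a : g), ((b + c : I) : g)⁆ = ⁅(a : g), (b : g)⁆ + ⁅(a : g), (c : g)⁆
    rw [Submodule.coe_add, LeibnizAlgebra.bracket_add])
  smul_bracket c a b := Subtype.ext (by
    show ⁅((c • a : I) : g), (b : g)⁆ = c • ⁅(a : g), (b : g)⁆
    rw [Submodule.coe_smul, LeibnizAlgebra.smul_bracket])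
  bracket_smul c a b := Subtype.ext (by
    show ⁅(a : g), ((c • b : I) : g)⁆ = c • ⁅(a : g), (b : g)⁆
    rw [Submodule.coe_smul, LeibnizAlgebra.bracket_smul])
  leibniz a b c := Subtype.ext (by
    show ⁅(a : g), ⁅(b : g), (c : g)⁆⁆ =
      ⁅⁅(a : g), (b : g)⁆, (c : g)⁆ + ⁅(b : g), ⁅(a : g), (c : g)⁆⁆
    exact LeibnizAlgebra.leibniz (a : g) (b : g) (c : g))

end Quotient

section Constructions

variable {K : Type u} [Field K]

/-- The direct sum of two Leibniz algebras, with componentwise bracket. -/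
instance prodLeibniz (g₁ : Type v) (g₂ : Type v) [AddCommGroup g₁] [Module K g₁]
    [LeibnizAlgebra K g₁] [AddCommGroup g₂] [Module K g₂] [LeibnizAlgebra K g₂] :
    LeibnizAlgebra K (g₁ × g₂) where
  bracket x y := (⁅x.1, y.1⁆, ⁅x.2, y.2⁆)
  add_bracket x y z := Prod.ext_iff.2
    ⟨LeibnizAlgebra.add_bracket x.1 y.1 z.1, LeibnizAlgebra.add_bracket x.2 y.2 z.2⟩
  bracket_add x y z := Prod.ext_iff.2
    ⟨LeibnizAlgebra.bracket_add x.1 y.1 z.1, LeibnizAlgebra.bracket_add x.2 y.2 z.2⟩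
  smul_bracket c x y := Prod.ext_iff.2
    ⟨LeibnizAlgebra.smul_bracket c x.1 y.1, LeibnizAlgebra.smul_bracket c x.2 y.2⟩
  bracket_smul c x y := Prod.ext_iff.2
    ⟨LeibnizAlgebra.bracket_smul c x.1 y.1, LeibnizAlgebra.bracket_smul c x.2 y.2⟩
  leibniz x y z := Prod.ext_iff.2
    ⟨LeibnizAlgebra.leibniz x.1 y.1 z.1, LeibnizAlgebra.leibniz x.2 y.2 z.2⟩

/-- The direct sum of countably many copies of a Leibniz algebra `H`
(finitely supported sequences), with componentwise bracket. -/
noncomputable instance finsuppLeibniz (H : Type v) [AddCommGroup H] [Module K H]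
    [LeibnizAlgebra K H] : LeibnizAlgebra K (ℕ →₀ H) where
  bracket f h := Finsupp.zipWith (fun a b : H => ⁅a, b⁆) (zero_bracket K H 0) f h
  add_bracket f f' h := by
    ext i
    simp only [Finsupp.zipWith_apply, Finsupp.add_apply]
    exact LeibnizAlgebra.add_bracket (f i) (f' i) (h i)
  bracket_add f h h' := by
    ext i
    simp only [Finsupp.zipWith_apply, Finsupp.add_apply]
    exact LeibnizAlgebra.bracket_add (f i) (h i) (h' i)
  smul_bracket c f h := by
    ext i
    simp only [Finsupp.zipWith_apply, Finsupp.smul_apply]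
    exact LeibnizAlgebra.smul_bracket c (f i) (h i)
  bracket_smul c f h := by
    ext i
    simp only [Finsupp.zipWith_apply, Finsupp.smul_apply]
    exact LeibnizAlgebra.bracket_smul c (f i) (h i)
  leibniz f h k := by
    ext i
    simp only [Finsupp.zipWith_apply, Finsupp.add_apply]
    exact LeibnizAlgebra.leibniz (f i) (h i) (k i)

end Constructions

end Leibniz

open Leibniz

section Aux

variable {K : Type u} {g : Type v} [Field K] [AddCommGroup g] [Module K g] [LeibnizAlgebra K g]

lemma Leibniz.bk_mono {A A' B B' : Submodule K g} (hA : A ≤ A') (hB : B ≤ B') :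
    bk K g A B ≤ bk K g A' B' :=
  Submodule.span_mono (by rintro z ⟨a, ha, b, hb, rfl⟩; exact ⟨a, hA ha, b, hB hb, rfl⟩)

lemma Leibniz.mem_bk {A B : Submodule K g} {a b : g} (ha : a ∈ A) (hb : b ∈ B) :
    ⁅a, b⁆ ∈ bk K g A B :=
  Submodule.subset_span ⟨a, ha, b, hb, rfl⟩

lemma Leibniz.derived_succ_le (n : ℕ) : derived K g (n + 1) ≤ derived K g n := by
  induction n with
  | zero => exact le_top
  | succ n ih =>
    show bk K g (derived K g (n + 1)) (derived K g (n + 1)) ≤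
      bk K g (derived K g n) (derived K g n)
    exact bk_mono ih ih

lemma Leibniz.derived_anti {a b : ℕ} (h : a ≤ b) : derived K g b ≤ derived K g a :=
  antitone_nat_of_succ_le (fun n => Leibniz.derived_succ_le n) h

lemma Leibniz.map_derived_le (I : Submodule K g) (hI : IsIdeal K g I) (m : ℕ) :
    (derived K g m).map I.mkQ ≤ @derived K (g ⧸ I) _ _ _ (quotLeibniz I hI) m := by
  letI := quotLeibniz I hI
  induction m with
  | zero => exact le_top
  | succ m ih =>
    show (bk K g (derived K g m) (derived K g m)).map I.mkQ ≤
      bk K (g ⧸ I) (derived K (g ⧸ I) m) (derived K (g ⧸ I) m)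
    rw [bk, Submodule.map_span]
    refine Submodule.span_le.2 ?_
    rintro z ⟨w, ⟨a, ha, b, hb, rfl⟩, rfl⟩
    have h1 : I.mkQ ⁅a, b⁆ = ⁅I.mkQ a, I.mkQ b⁆ := rfl
    rw [h1]
    exact Submodule.subset_span ⟨_, ih ⟨a, ha, rfl⟩, _, ih ⟨b, hb, rfl⟩, rfl⟩

end Aux

/-- If `g/I` is quasi-Artinian and the ideal `I` is Artinian (as a Leibniz algebra),
then `g` is quasi-Artinian. -/
theorem quasiArtinian_of_quotient_quasiArtinian_ideal_artinian (K : Type u) (g : Type v) [Field K] [AddCommGroup g] [Module K g]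
    [LeibnizAlgebra K g]
    (I : Submodule K g) (hI : IsIdeal K g I)
    (hquot : @QuasiArtinian K (g ⧸ I) _ _ _ (quotLeibniz I hI))
    (hart : @ArtinianAlg K I _ _ _ (idealLeibniz I hI)) :
    QuasiArtinian K g := by
  letI instQ : LeibnizAlgebra K (g ⧸ I) := quotLeibniz I hI
  letI instI : LeibnizAlgebra K I := idealLeibniz I hI
  intro J hJ hdesc
  have hJanti : ∀ {a b : ℕ}, a ≤ b → J b ≤ J a :=
    fun h => antitone_nat_of_succ_le hdesc h
  -- the chain of images in g⧸I
  set Jbar : ℕ → Submodule K (g ⧸ I) := fun n => (J n).map I.mkQ with hJbarDef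
  have hJbarIdeal : ∀ n, IsIdeal K (g ⧸ I) (Jbar n) := by
    intro n X A hA
    obtain ⟨a, ha, rfl⟩ := hA
    obtain ⟨x, rfl⟩ := I.mkQ_surjective X
    exact ⟨⟨⁅x, a⁆, (hJ n x a ha).1, rfl⟩, ⟨⁅a, x⁆, (hJ n x a ha).2, rfl⟩⟩
  have hJbardesc : ∀ n, Jbar (n + 1) ≤ Jbar n := fun n => Submodule.map_mono (hdesc n)
  obtain ⟨m₁, hm₁⟩ := hquot Jbar hJbarIdeal hJbardesc
  -- the chain of intersections with I
  set J' : ℕ → Submodule K I := fun n => (J n).comap I.subtype with hJ'Def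
  have hJ'Ideal : ∀ n, IsIdeal K I (J' n) := by
    intro n x a ha
    exact ⟨(hJ n x.1 a.1 ha).1, (hJ n x.1 a.1 ha).2⟩
  obtain ⟨m₂, hm₂⟩ := hart J' hJ'Ideal (fun n => Submodule.comap_mono (hdesc n))
  refine ⟨max m₁ m₂, fun n => ?_⟩
  set m := max m₁ m₂ with hmdef
  have key : ∀ z : g, z ∈ J m → I.mkQ z ∈ Jbar n → z ∈ J n := by
    intro z hzm hzn
    rcases le_or_gt n m with hnm | hmn
    · exact hJanti hnm hzm
    · have hz' : z ∈ J n ⊔ I := by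
        have hcm := Submodule.comap_map_eq I.mkQ (J n)
        rw [Submodule.ker_mkQ] at hcm
        rw [← hcm]
        exact hzn
      obtain ⟨j, hj, i, hi, rfl⟩ := Submodule.mem_sup.1 hz'
      have hiJm : i ∈ J m := by
        have h2 : (j + i) - j ∈ J m := (J m).sub_mem hzm (hJanti hmn.le hj)
        simpa using h2
      have hiJn : (⟨i, hi⟩ : I) ∈ J' n := by
        rw [hm₂ n (le_trans (le_max_right m₁ m₂) hmn.le),
          ← hm₂ m (le_max_right m₁ m₂)]
        exact hiJm
      exact (J n).add_mem hj hiJn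
  constructor
  · refine Submodule.span_le.2 ?_
    rintro z ⟨x, hx, a, ha, rfl⟩
    refine key ⁅x, a⁆ (hJ m x a ha).1 ?_
    have h1 : I.mkQ ⁅x, a⁆ = ⁅I.mkQ x, I.mkQ a⁆ := rfl
    rw [h1]
    have hx' : I.mkQ x ∈ derived K (g ⧸ I) m₁ :=
      Leibniz.map_derived_le I hI m₁ ⟨x, Leibniz.derived_anti (le_max_left m₁ m₂) hx, rfl⟩
    have ha' : I.mkQ a ∈ Jbar m₁ := ⟨a, hJanti (le_max_left m₁ m₂) ha, rfl⟩
    exact (hm₁ n).1 (Leibniz.mem_bk hx' ha')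
  · refine Submodule.span_le.2 ?_
    rintro z ⟨a, ha, x, hx, rfl⟩
    refine key ⁅a, x⁆ (hJ m x a ha).2 ?_
    have h1 : I.mkQ ⁅a, x⁆ = ⁅I.mkQ a, I.mkQ x⁆ := rfl
    rw [h1]
    have hx' : I.mkQ x ∈ derived K (g ⧸ I) m₁ :=
      Leibniz.map_derived_le I hI m₁ ⟨x, Leibniz.derived_anti (le_max_left m₁ m₂) hx, rfl⟩
    have ha' : I.mkQ a ∈ Jbar m₁ := ⟨a, hJanti (le_max_left m₁ m₂) ha, rfl⟩
    exact (hm₁ n).2 (Leibniz.mem_bk ha' hx')
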